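/- Let p∈(0,1] and let F be a continuous cumulative distribution function on [0,∞) with F(0)=0, F(t)<1 for all t, and ∫₀^∞(1-F(t))dt < ∞. For each T>0, set a_T := 1-F(T), let N_T be a (shifted) geometric random variable with success probability a_T, let (A_i^{(T)}) be i.i.d. with CDF F_T(t):=F(t)/F(T) on [0,T], and (R_i) i.i.d. Bernoulli(p), all independent; define S_T(1) := T + Σ_{i=1}^{N_T-1}A_i^{(T)} and S_T(p) := T·1{R_i=1 for some i∈{0,...,N_T-1}} + Σ over consecutive indices j<j' in {0,...,N_T-1} with R_j=R_{j'}=1 and R_i=0 for j<i<j' of max{A^{(T)}_{j+1},...,A^{(T)}_{j'}}. Then lim_{T→∞} E(S_T(p))/E(S_T(1)) = p·∫₀^∞ (1-F(t))/(1-(1-p)F(t)) dt / ∫₀^∞ (1-F(t)) dt. -/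

import Mathlib

open MeasureTheory ProbabilityTheory Filter Set

/-- The maximum of `A i` over `j < i ≤ j'` (junk value `0` if the range is empty). -/
noncomputable def blockMax (A : ℕ → ℝ) (j j' : ℕ) : ℝ :=
  if h : j < j' then (Finset.Ioc j j').sup' (by simpa [Finset.nonempty_Ioc] using h) A else 0

/-- The surviving phylogenetic diversity minus the stem age: tips are `0, ..., n-1`,
tip `i` is sampled when `R i = true`, and we sum, over each pair `j < j'` of consecutive
sampled tips, the maximum of the node depths `A (j+1), ..., A j'`. -/
noncomputable def survPD (A : ℕ → ℝ) (R : ℕ → Bool) (n : ℕ) : ℝ :=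
  ∑ j ∈ Finset.range n, ∑ j' ∈ Finset.range n,
    if j < j' ∧ R j = true ∧ R j' = true ∧ (∀ i ∈ Finset.Ioo j j', R i = false)
    then blockMax A j j' else 0

/-- The surviving phylogenetic diversity: the stem age `T` (provided at least one of the
tips `0, ..., n-1` is sampled) plus the surviving PD minus stem age. -/
noncomputable def survPDfull (T : ℝ) (A : ℕ → ℝ) (R : ℕ → Bool) (n : ℕ) : ℝ :=
  (if ∃ i ∈ Finset.range n, R i = true then T else 0) + survPD A R n

/-!
Fix `T`, write `c = F T` and let `G = F / F T` be the law of the node depths. Since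
`P(N > k) = c ^ k` and `N`, the depths and the sampling marks are independent, both diversities
split into sums of terms `1{k < N} · 1{marks ∈ pattern} · g(depths)` whose expectations factor:
the stem is counted through the first sampled tip `j` (probability `c ^ j (1 - p) ^ j p`), each
pair of consecutive sampled tips `j, j + 1 + l` contributes `c ^ (j + 1 + l) p ^ 2 (1 - p) ^ l`
times the mean maximum of `l + 1` depths, `∫₀ᵀ (1 - G ^ (l + 1))`. Summing the geometric series
gives, exactly for every `T`,
`E S_T(p) = p / (1 - F T) * ∫₀ᵀ (1 - F) / (1 - (1 - p) F)` and `E S_T(1) = (1 - F T)⁻¹ ∫₀ᵀ (1 - F)`,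
so the ratio is `p ∫₀ᵀ (1 - F) / (1 - (1 - p) F) / ∫₀ᵀ (1 - F)`, whose limit is immediate.
-/

open scoped ENNReal

section Independence

variable {Ω α β γ : Type*} [MeasurableSpace Ω] [MeasurableSpace α] [MeasurableSpace β]
  [MeasurableSpace γ] {μ : Measure Ω} {X : Ω → α} {Y : Ω → β} {Z : Ω → γ}

lemma setLIntegral_comp_eq_mul (hY : Measurable Y) {S : Set Ω}
    (hS : ∀ t, MeasurableSet t → μ (Y ⁻¹' t ∩ S) = μ S * μ (Y ⁻¹' t)) {g : β → ℝ≥0∞}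
    (hg : Measurable g) :
    ∫⁻ ω in S, g (Y ω) ∂μ = μ S * ∫⁻ ω, g (Y ω) ∂μ := by
  have hmap : (μ.restrict S).map Y = μ S • μ.map Y := by
    ext t ht
    rw [Measure.map_apply hY ht, Measure.restrict_apply (hY ht), hS t ht, Measure.smul_apply,
      Measure.map_apply hY ht, smul_eq_mul]
  rw [← lintegral_map hg hY, hmap, lintegral_smul_measure, smul_eq_mul, lintegral_map hg hY]

lemma ProbabilityTheory.IndepFun.setLIntegral_comp (h : IndepFun X Y μ) (hY : Measurable Y)
    {s : Set α} (hs : MeasurableSet s) {g : β → ℝ≥0∞} (hg : Measurable g) :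
    ∫⁻ ω in X ⁻¹' s, g (Y ω) ∂μ = μ (X ⁻¹' s) * ∫⁻ ω, g (Y ω) ∂μ :=
  setLIntegral_comp_eq_mul hY (fun t ht => by
    rw [inter_comm, indepFun_iff_measure_inter_preimage_eq_mul.1 h s t hs ht]) hg

def IndepTriple (X : Ω → α) (Y : Ω → β) (Z : Ω → γ) (μ : Measure Ω) : Prop :=
  ∀ s t u, MeasurableSet s → MeasurableSet t → MeasurableSet u →
    μ (X ⁻¹' s ∩ Y ⁻¹' t ∩ Z ⁻¹' u) = μ (X ⁻¹' s) * μ (Y ⁻¹' t) * μ (Z ⁻¹' u)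

namespace IndepTriple

variable [IsProbabilityMeasure μ]

lemma measure_inter (h : IndepTriple X Y Z μ) {s : Set α} {u : Set γ} (hs : MeasurableSet s)
    (hu : MeasurableSet u) :
    μ (X ⁻¹' s ∩ Z ⁻¹' u) = μ (X ⁻¹' s) * μ (Z ⁻¹' u) := by
  simpa using h s univ u hs MeasurableSet.univ hu

lemma indepFun_left (h : IndepTriple X Y Z μ) : IndepFun X Y μ :=
  indepFun_iff_measure_inter_preimage_eq_mul.2 fun s t hs ht => by
    simpa using h s t univ hs ht MeasurableSet.univ

lemma setLIntegral_comp (h : IndepTriple X Y Z μ) (hY : Measurable Y) {s : Set α} {u : Set γ}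
    (hs : MeasurableSet s) (hu : MeasurableSet u) {g : β → ℝ≥0∞} (hg : Measurable g) :
    ∫⁻ ω in X ⁻¹' s ∩ Z ⁻¹' u, g (Y ω) ∂μ = μ (X ⁻¹' s) * μ (Z ⁻¹' u) * ∫⁻ ω, g (Y ω) ∂μ := by
  rw [← h.measure_inter hs hu]
  refine setLIntegral_comp_eq_mul hY (fun t ht => ?_) hg
  rw [h.measure_inter hs hu, mul_right_comm, ← h s t u hs ht hu]
  congr 1
  ext ω
  simp only [mem_inter_iff, mem_preimage]
  tauto

end IndepTriple

end Independence

section Series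

variable {c p T : ℝ} {G : ℝ → ℝ}

lemma tsum_ofReal_of_hasSum {f : ℕ → ℝ} {a : ℝ} (hf : HasSum f a) (h0 : ∀ n, 0 ≤ f n) :
    ∑' n, ENNReal.ofReal (f n) = ENNReal.ofReal a := by
  rw [← ENNReal.ofReal_tsum_of_nonneg h0 hf.summable, hf.tsum_eq]

lemma hasSum_pow_mul_sub_pow {q x y : ℝ} (hq : 0 ≤ q) (hx : 0 ≤ x) (hxy : x ≤ y)
    (hqy : q * y < 1) :
    HasSum (fun l : ℕ => q ^ l * (y ^ (l + 1) - x ^ (l + 1)))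
      ((y - x) / ((1 - q * y) * (1 - q * x))) := by
  have hqx : q * x < 1 := lt_of_le_of_lt (mul_le_mul_of_nonneg_left hxy hq) hqy
  have hy := (hasSum_geometric_of_lt_one (mul_nonneg hq (hx.trans hxy)) hqy).mul_left y
  have hx' := (hasSum_geometric_of_lt_one (mul_nonneg hq hx) hqx).mul_left x
  have hterm : (fun l : ℕ => q ^ l * (y ^ (l + 1) - x ^ (l + 1)))
      = fun l => y * (q * y) ^ l - x * (q * x) ^ l := by
    funext l
    ring
  have hsum : y * (1 - q * y)⁻¹ - x * (1 - q * x)⁻¹ = (y - x) / ((1 - q * y) * (1 - q * x)) := by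
    rw [← div_eq_mul_inv, ← div_eq_mul_inv, div_sub_div _ _ (sub_pos.2 hqy).ne' (sub_pos.2 hqx).ne']
    congr 1
    ring
  exact hterm ▸ hsum ▸ hy.sub hx'

lemma tsum_stem (hc0 : 0 ≤ c) (hc1 : c < 1) (hp0 : 0 ≤ p) (hp1 : p ≤ 1) (hT : 0 ≤ T) :
    ∑' j, ENNReal.ofReal (c ^ j) * ENNReal.ofReal ((1 - p) ^ j * p) * ENNReal.ofReal T
      = ∫⁻ _ in Ioc 0 T, ENNReal.ofReal (p / (1 - (1 - p) * c)) := by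
  have hq : 0 ≤ (1 - p) * c := mul_nonneg (by linarith) hc0
  have hqc : (1 - p) * c < 1 := by nlinarith
  have hsum : HasSum (fun j => c ^ j * ((1 - p) ^ j * p) * T) (p * T * (1 - (1 - p) * c)⁻¹) := by
    have hfun : (fun j => c ^ j * ((1 - p) ^ j * p) * T) = fun j => p * T * ((1 - p) * c) ^ j := by
      funext j
      rw [mul_pow]
      ring
    exact hfun ▸ (hasSum_geometric_of_lt_one hq hqc).mul_left (p * T)
  have hnonneg : ∀ j, 0 ≤ c ^ j * ((1 - p) ^ j * p) :=
    fun j => mul_nonneg (pow_nonneg hc0 j) (mul_nonneg (pow_nonneg (by linarith) j) hp0)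
  rw [setLIntegral_const, Real.volume_Ioc, sub_zero,
    ← ENNReal.ofReal_mul (div_nonneg hp0 (by linarith)), div_mul_eq_mul_div, div_eq_mul_inv,
    ← tsum_ofReal_of_hasSum hsum fun j => mul_nonneg (hnonneg j) hT]
  exact tsum_congr fun j => by
    rw [← ENNReal.ofReal_mul (pow_nonneg hc0 j), ← ENNReal.ofReal_mul (hnonneg j)]

lemma tsum_consecutive (hc0 : 0 ≤ c) (hc1 : c < 1) (hp0 : 0 ≤ p) (hp1 : p ≤ 1)
    (hG : Measurable G) (hG01 : ∀ t ∈ Ioc 0 T, G t ∈ Icc 0 1) :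
    ∑' j, ∑' l, ENNReal.ofReal (c ^ (j + 1 + l)) * ENNReal.ofReal (p ^ 2 * (1 - p) ^ l)
        * ∫⁻ t in Ioc 0 T, ENNReal.ofReal (1 - G t ^ (l + 1))
      = ∫⁻ t in Ioc 0 T, ENNReal.ofReal (p ^ 2 * (c - c * G t)
          / ((1 - c) * ((1 - (1 - p) * c) * (1 - (1 - p) * (c * G t))))) := by
  have hq : 0 ≤ 1 - p := by linarith
  have hqc : (1 - p) * c < 1 := by nlinarith
  have hterm : ∀ j l, ENNReal.ofReal (c ^ (j + 1 + l)) * ENNReal.ofReal (p ^ 2 * (1 - p) ^ l)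
        * ∫⁻ t in Ioc 0 T, ENNReal.ofReal (1 - G t ^ (l + 1))
      = ENNReal.ofReal (c ^ j) * ∫⁻ t in Ioc 0 T,
          ENNReal.ofReal (p ^ 2 * ((1 - p) ^ l * (c ^ (l + 1) - (c * G t) ^ (l + 1)))) := by
    intro j l
    rw [← ENNReal.ofReal_mul (pow_nonneg hc0 _), ← lintegral_const_mul' _ _ ENNReal.ofReal_ne_top,
      ← lintegral_const_mul' _ _ ENNReal.ofReal_ne_top]
    refine setLIntegral_congr_fun measurableSet_Ioc fun t ht => ?_
    rw [← ENNReal.ofReal_mul (mul_nonneg (pow_nonneg hc0 _) (mul_nonneg (sq_nonneg p)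
      (pow_nonneg hq l))), ← ENNReal.ofReal_mul (pow_nonneg hc0 _)]
    congr 1
    ring
  have hinner : ∀ t ∈ Ioc 0 T, ∑' l,
      ENNReal.ofReal (p ^ 2 * ((1 - p) ^ l * (c ^ (l + 1) - (c * G t) ^ (l + 1))))
      = ENNReal.ofReal
          (p ^ 2 * ((c - c * G t) / ((1 - (1 - p) * c) * (1 - (1 - p) * (c * G t))))) := by
    intro t ht
    obtain ⟨hG0, hG1⟩ := hG01 t ht
    have hx : 0 ≤ c * G t := mul_nonneg hc0 hG0
    have hxc : c * G t ≤ c := mul_le_of_le_one_right hc0 hG1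
    exact tsum_ofReal_of_hasSum ((hasSum_pow_mul_sub_pow hq hx hxc hqc).mul_left _) fun l =>
      mul_nonneg (sq_nonneg p) (mul_nonneg (pow_nonneg hq l)
        (sub_nonneg.2 (pow_le_pow_left₀ hx hxc _)))
  simp_rw [hterm, ENNReal.tsum_mul_left, ENNReal.tsum_mul_right]
  rw [← lintegral_tsum fun l => by fun_prop, setLIntegral_congr_fun measurableSet_Ioc hinner,
    tsum_ofReal_of_hasSum (hasSum_geometric_of_lt_one hc0 hc1) (pow_nonneg hc0),
    ← lintegral_const_mul' _ _ ENNReal.ofReal_ne_top]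
  refine setLIntegral_congr_fun measurableSet_Ioc fun t ht => ?_
  rw [← ENNReal.ofReal_mul (inv_nonneg.2 (by linarith))]
  congr 1
  field_simp

lemma stem_add_consecutive (hc0 : 0 ≤ c) (hc1 : c < 1) (hp0 : 0 ≤ p) {x : ℝ}
    (hx : 0 ≤ x) (hxc : x ≤ c) :
    ENNReal.ofReal (p / (1 - (1 - p) * c)) + ENNReal.ofReal (p ^ 2 * (c - x)
        / ((1 - c) * ((1 - (1 - p) * c) * (1 - (1 - p) * x))))
      = ENNReal.ofReal (p * (1 - x) / ((1 - c) * (1 - (1 - p) * x))) := by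
  have hD : 0 < 1 - (1 - p) * c := by nlinarith
  have hE : 0 < 1 - (1 - p) * x := by nlinarith
  have hc : 0 < 1 - c := by linarith
  rw [← ENNReal.ofReal_add (by positivity) (div_nonneg (mul_nonneg (sq_nonneg p) (by linarith))
    (by positivity))]
  -- `(1 - c) * (1 - (1 - p) * x) + p * (c - x) = (1 - x) * (1 - (1 - p) * c)`
  congr 1
  field_simp
  ring

end Series

section SamplingPatterns

/-- Tip `j` is the first sampled tip. -/
def firstSampled (j : ℕ) : Set (ℕ → Bool) := {r | ∀ k < j + 1, r k = decide (k = j)}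

/-- Tips `j` and `j + 1 + l` are sampled and the `l` tips between them are not. -/
def consecutiveSampled (j l : ℕ) : Set (ℕ → Bool) :=
  {r | ∀ k < l + 2, r (j + k) = decide (k = 0 ∨ k = l + 1)}

instance (j : ℕ) (r : ℕ → Bool) : Decidable (r ∈ firstSampled j) :=
  inferInstanceAs (Decidable (∀ k < j + 1, r k = decide (k = j)))

instance (j l : ℕ) (r : ℕ → Bool) : Decidable (r ∈ consecutiveSampled j l) :=
  inferInstanceAs (Decidable (∀ k < l + 2, r (j + k) = decide (k = 0 ∨ k = l + 1)))

lemma mem_firstSampled_iff {r : ℕ → Bool} {j : ℕ} :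
    r ∈ firstSampled j ↔ r j = true ∧ ∀ k < j, r k = false := by
  refine ⟨fun h => ⟨by simpa using h j (by omega),
    fun k hk => by simpa [hk.ne] using h k (by omega)⟩, fun h k hk => ?_⟩
  rcases Nat.lt_succ_iff_lt_or_eq.1 hk with hk | rfl
  · simpa [hk.ne] using h.2 k hk
  · simpa using h.1

lemma mem_consecutiveSampled_iff {r : ℕ → Bool} {j l : ℕ} :
    r ∈ consecutiveSampled j l ↔
      r j = true ∧ r (j + 1 + l) = true ∧ ∀ i ∈ Finset.Ioo j (j + 1 + l), r i = false := by
  have hlast : j + (l + 1) = j + 1 + l := by omega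
  constructor
  · intro h
    refine ⟨by simpa using h 0 (by omega), by simpa [hlast] using h (l + 1) (by omega),
      fun i hi => ?_⟩
    rw [Finset.mem_Ioo] at hi
    simpa [show j + (i - j) = i by omega, show i - j ≠ 0 by omega,
      show i - j ≠ l + 1 by omega] using h (i - j) (by omega)
  · rintro ⟨h0, hl, hmid⟩ k hk
    rcases Nat.eq_zero_or_pos k with rfl | hk0
    · simpa using h0
    rcases eq_or_ne k (l + 1) with rfl | hkl
    · simpa [hlast] using hl
    · simpa [hk0.ne', hkl] using hmid (j + k) (Finset.mem_Ioo.2 ⟨by omega, by omega⟩)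

lemma measurableSet_firstSampled (j : ℕ) : MeasurableSet (firstSampled j) := by
  unfold firstSampled
  measurability

lemma measurableSet_consecutiveSampled (j l : ℕ) : MeasurableSet (consecutiveSampled j l) := by
  unfold consecutiveSampled
  measurability

end SamplingPatterns

section Laws

variable {Ω : Type*} [MeasurableSpace Ω] {μ : Measure Ω}

lemma measure_preimage_Ioi_of_geometric [IsFiniteMeasure μ] {N : Ω → ℕ} (hN : Measurable N)
    {c : ℝ} (hc0 : 0 ≤ c) (hc1 : c < 1)
    (hgeom : ∀ n, 1 ≤ n → (μ {ω | N ω = n}).toReal = c ^ (n - 1) * (1 - c)) (k : ℕ) :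
    μ (N ⁻¹' Ioi k) = ENNReal.ofReal (c ^ k) := by
  have hunion : N ⁻¹' Ioi k = ⋃ m, {ω | N ω = k + 1 + m} := by
    ext ω
    simp only [mem_preimage, mem_Ioi, mem_ofPred_eq, mem_iUnion]
    exact ⟨fun h => ⟨N ω - (k + 1), by omega⟩, fun ⟨m, hm⟩ => by omega⟩
  have hdisj : Pairwise (Function.onFun Disjoint fun m => {ω | N ω = k + 1 + m}) :=
    fun m m' hm => disjoint_left.2 fun ω h h' => hm (by simp only [mem_ofPred_eq] at h h'; omega)
  have hterm : ∀ m, μ {ω | N ω = k + 1 + m} = ENNReal.ofReal (c ^ k * (1 - c) * c ^ m) := by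
    intro m
    rw [← ENNReal.ofReal_toReal (measure_ne_top μ _), hgeom _ (by omega),
      show k + 1 + m - 1 = k + m by omega, pow_add]
    ring_nf
  have hsum : HasSum (fun m => c ^ k * (1 - c) * c ^ m) (c ^ k) := by
    simpa [mul_assoc, mul_inv_cancel₀ (sub_pos.2 hc1).ne'] using
      (hasSum_geometric_of_lt_one hc0 hc1).mul_left (c ^ k * (1 - c))
  rw [hunion, measure_iUnion hdisj fun m => hN (measurableSet_singleton _), tsum_congr hterm,
    tsum_ofReal_of_hasSum hsum fun m =>
      mul_nonneg (mul_nonneg (pow_nonneg hc0 k) (sub_pos.2 hc1).le) (pow_nonneg hc0 m)]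

variable [IsProbabilityMeasure μ] {R : ℕ → Ω → Bool} {p : ℝ}

lemma measure_eq_ofReal_of_bernoulli (hR : ∀ i, Measurable (R i))
    (hp : ∀ i, (μ {ω | R i ω = true}).toReal = p) (i : ℕ) (b : Bool) :
    μ {ω | R i ω = b} = ENNReal.ofReal (if b then p else 1 - p) := by
  have htrue : μ {ω | R i ω = true} = ENNReal.ofReal p := by
    rw [← hp i, ENNReal.ofReal_toReal (measure_ne_top μ _)]
  cases b
  · have hcompl : {ω | R i ω = false} = {ω | R i ω = true}ᶜ := by ext ω; simp
    rw [hcompl, prob_compl_eq_one_sub (show MeasurableSet {ω | R i ω = true} from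
      hR i (measurableSet_singleton true)), htrue,
      if_neg Bool.false_ne_true, ENNReal.ofReal_sub _ (hp i ▸ ENNReal.toReal_nonneg),
      ENNReal.ofReal_one]
  · exact htrue

lemma measure_forall_lt_eq_prod (hR : ∀ i, Measurable (R i)) (hind : iIndepFun R μ)
    (hp : ∀ i, (μ {ω | R i ω = true}).toReal = p) (j m : ℕ) (b : ℕ → Bool) :
    μ {ω | ∀ k < m, R (j + k) ω = b k}
      = ENNReal.ofReal (∏ k ∈ Finset.range m, if b k then p else 1 - p) := by
  have hp0 : 0 ≤ p := hp 0 ▸ ENNReal.toReal_nonneg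
  have hp1 : p ≤ 1 := hp 0 ▸ measureReal_le_one
  have hinter : {ω | ∀ k < m, R (j + k) ω = b k}
      = ⋂ k ∈ Finset.range m, {ω | R (j + k) ω = b k} := by ext ω; simp
  rw [hinter, (hind.precomp (add_right_injective j)).meas_biInter
      (s := fun k => {ω | R (j + k) ω = b k}) fun k _ => ⟨{b k}, measurableSet_singleton _, rfl⟩,
    ENNReal.ofReal_prod_of_nonneg fun k _ => by split_ifs <;> linarith]
  exact Finset.prod_congr rfl fun k _ => measure_eq_ofReal_of_bernoulli hR hp _ _

lemma measure_firstSampled (hR : ∀ i, Measurable (R i)) (hind : iIndepFun R μ)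
    (hp : ∀ i, (μ {ω | R i ω = true}).toReal = p) (j : ℕ) :
    μ ((fun ω i => R i ω) ⁻¹' firstSampled j) = ENNReal.ofReal ((1 - p) ^ j * p) := by
  have h := measure_forall_lt_eq_prod hR hind hp 0 (j + 1) fun k => decide (k = j)
  simp only [zero_add] at h
  refine h.trans ?_
  rw [Finset.prod_range_succ,
    Finset.prod_congr rfl fun k hk => if_neg (by simp at hk ⊢; omega), Finset.prod_const,
    Finset.card_range]
  simp

lemma measure_consecutiveSampled (hR : ∀ i, Measurable (R i)) (hind : iIndepFun R μ)
    (hp : ∀ i, (μ {ω | R i ω = true}).toReal = p) (j l : ℕ) :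
    μ ((fun ω i => R i ω) ⁻¹' consecutiveSampled j l) = ENNReal.ofReal (p ^ 2 * (1 - p) ^ l) := by
  refine (measure_forall_lt_eq_prod hR hind hp j (l + 2) _).trans ?_
  rw [Finset.prod_range_succ, Finset.prod_range_succ',
    Finset.prod_congr rfl fun k hk => if_neg (by simp at hk ⊢; omega), Finset.prod_const,
    Finset.card_range]
  simp only [decide_eq_true_eq, true_or, or_true, if_true]
  congr 1
  ring

end Laws

section Depths

variable {Ω : Type*} [MeasurableSpace Ω] {μ : Measure Ω} {T : ℝ} {H : ℝ → ℝ}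

lemma ae_nonneg_of_toReal_measure_le_zero [IsFiniteMeasure μ] {X : Ω → ℝ}
    (h : (μ {ω | X ω ≤ 0}).toReal = 0) : 0 ≤ᵐ[μ] X := by
  have h0 : μ {ω | X ω ≤ 0} = 0 := by
    rw [← ENNReal.ofReal_toReal (measure_ne_top μ _), h, ENNReal.ofReal_zero]
  filter_upwards [measure_eq_zero_iff_ae_notMem.1 h0] with ω hω
  exact le_of_lt (not_le.1 hω)

lemma lintegral_ofReal_eq_setLIntegral_one_sub_cdf [IsProbabilityMeasure μ] {X : Ω → ℝ}
    (hX : Measurable X) (hT : 0 ≤ T) (hcdf : ∀ t ∈ Icc 0 T, (μ {ω | X ω ≤ t}).toReal = H t)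
    (hH0 : H 0 = 0) (hHT : H T = 1) :
    ∫⁻ ω, ENNReal.ofReal (X ω) ∂μ = ∫⁻ t in Ioc 0 T, ENNReal.ofReal (1 - H t) := by
  have htail : ∀ t ∈ Icc 0 T, μ {ω | t < X ω} = ENNReal.ofReal (1 - H t) := by
    intro t ht
    have hcompl : {ω | t < X ω} = {ω | X ω ≤ t}ᶜ := by ext; simp
    rw [hcompl, prob_compl_eq_one_sub (show MeasurableSet {ω | X ω ≤ t} from
        hX measurableSet_Iic), ← hcdf t ht,
      ENNReal.ofReal_sub _ ENNReal.toReal_nonneg, ENNReal.ofReal_one,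
      ENNReal.ofReal_toReal (measure_ne_top _ _)]
  have hpos : 0 ≤ᵐ[μ] X :=
    ae_nonneg_of_toReal_measure_le_zero (by rw [hcdf 0 ⟨le_rfl, hT⟩, hH0])
  have hT0 : μ {ω | T < X ω} = 0 := by
    rw [htail T ⟨hT, le_rfl⟩, hHT, sub_self, ENNReal.ofReal_zero]
  have hnull : ∀ t ∈ Ioi T, μ {ω | t < X ω} = 0 := fun t ht =>
    measure_mono_null (fun ω (hω : t < X ω) => (lt_trans ht hω : T < X ω)) hT0
  rw [lintegral_eq_lintegral_meas_lt μ hpos hX.aemeasurable, ← Ioc_union_Ioi_eq_Ioi hT,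
    lintegral_union measurableSet_Ioi (Ioc_disjoint_Ioi le_rfl),
    setLIntegral_congr_fun measurableSet_Ioi hnull, lintegral_zero, add_zero]
  exact setLIntegral_congr_fun measurableSet_Ioc fun t ht => htail t (Ioc_subset_Icc_self ht)

lemma blockMax_le_iff {A : ℕ → ℝ} {j j' : ℕ} (h : j < j') {t : ℝ} :
    blockMax A j j' ≤ t ↔ ∀ i ∈ Finset.Ioc j j', A i ≤ t := by
  rw [blockMax, dif_pos h, Finset.sup'_le_iff]

lemma blockMax_nonneg {A : ℕ → ℝ} (hA : ∀ i, 0 ≤ A i) (j j' : ℕ) : 0 ≤ blockMax A j j' := by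
  unfold blockMax
  split_ifs with h
  · exact (hA j').trans (Finset.le_sup' A (Finset.mem_Ioc.2 ⟨h, le_rfl⟩))
  · exact le_rfl

lemma measurable_blockMax (j j' : ℕ) : Measurable fun A : ℕ → ℝ => blockMax A j j' := by
  unfold blockMax
  split_ifs with h
  · convert Finset.measurable_sup' (f := fun i (A : ℕ → ℝ) => A i) (Finset.nonempty_Ioc.2 h)
      fun i _ => measurable_pi_apply i with A
    rw [Finset.sup'_apply]
  · exact measurable_const

lemma toReal_measure_blockMax_le {A : ℕ → Ω → ℝ} (hind : iIndepFun A μ) {t x : ℝ}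
    (hcdf : ∀ i, (μ {ω | A i ω ≤ t}).toReal = x) {j j' : ℕ} (h : j < j') :
    (μ {ω | blockMax (fun i => A i ω) j j' ≤ t}).toReal = x ^ (j' - j) := by
  have hinter : {ω | blockMax (fun i => A i ω) j j' ≤ t}
      = ⋂ i ∈ Finset.Ioc j j', {ω | A i ω ≤ t} := by
    ext ω
    simp [blockMax_le_iff h]
  rw [hinter, hind.meas_biInter (s := fun i => {ω | A i ω ≤ t})
      fun i _ => ⟨Iic t, measurableSet_Iic, rfl⟩, ENNReal.toReal_prod,
    Finset.prod_congr rfl fun i _ => hcdf i, Finset.prod_const, Nat.card_Ioc]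

lemma lintegral_blockMax [IsProbabilityMeasure μ] {A : ℕ → Ω → ℝ} (hA : ∀ i, Measurable (A i))
    (hind : iIndepFun A μ) (hT : 0 ≤ T)
    (hcdf : ∀ i, ∀ t ∈ Icc 0 T, (μ {ω | A i ω ≤ t}).toReal = H t) (hH0 : H 0 = 0)
    (hHT : H T = 1) {j j' : ℕ} (h : j < j') :
    ∫⁻ ω, ENNReal.ofReal (blockMax (fun i => A i ω) j j') ∂μ
      = ∫⁻ t in Ioc 0 T, ENNReal.ofReal (1 - H t ^ (j' - j)) :=
  lintegral_ofReal_eq_setLIntegral_one_sub_cdf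
    ((measurable_blockMax j j').comp (measurable_pi_lambda _ hA)) hT
    (fun t ht => toReal_measure_blockMax_le hind (fun i => hcdf i t ht) h)
    (by rw [hH0, zero_pow (by omega)]) (by rw [hHT, one_pow])

end Depths

section Decompositions

lemma tsum_ite_lt {M : Type*} [AddCommMonoid M] [TopologicalSpace M] (f : ℕ → M) (n : ℕ) :
    ∑' k, (if k < n then f k else 0) = ∑ k ∈ Finset.range n, f k := by
  rw [tsum_eq_sum (s := Finset.range n) fun k hk => if_neg (by simpa using hk)]
  exact Finset.sum_congr rfl fun k hk => if_pos (Finset.mem_range.1 hk)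

lemma ofReal_add_sum_Ico_one {a : ℕ → ℝ} (ha : ∀ i, 0 ≤ a i) {T : ℝ} (hT : 0 ≤ T) (n : ℕ) :
    ENNReal.ofReal (T + ∑ i ∈ Finset.Ico 1 n, a i)
      = ENNReal.ofReal T + ∑' k, if k + 1 < n then ENNReal.ofReal (a (k + 1)) else 0 := by
  rw [ENNReal.ofReal_add hT (Finset.sum_nonneg fun i _ => ha i),
    ENNReal.ofReal_sum_of_nonneg fun i _ => ha i, Finset.sum_Ico_eq_sum_range, ← tsum_ite_lt]
  congr 2 with k
  rw [add_comm 1 k]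
  exact if_congr (by omega) rfl rfl

lemma ite_exists_eq_tsum_firstSampled {M : Type*} [AddCommMonoid M] [TopologicalSpace M]
    (r : ℕ → Bool) (n : ℕ) (x : M) :
    (if ∃ i ∈ Finset.range n, r i = true then x else 0)
      = ∑' j, if j < n ∧ r ∈ firstSampled j then x else 0 := by
  simp only [mem_firstSampled_iff]
  split_ifs with h
  · classical
    obtain ⟨j, ⟨hjn, hj⟩, hmin⟩ : ∃ j, (j < n ∧ r j = true) ∧ ∀ k < j, ¬ (k < n ∧ r k = true) :=
      ⟨Nat.find (p := fun i => i < n ∧ r i = true) (by simpa using h),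
        Nat.find_spec (p := fun i => i < n ∧ r i = true) (by simpa using h),
        fun k hk => Nat.find_min (p := fun i => i < n ∧ r i = true) (by simpa using h) hk⟩
    have huniq : ∀ j' ≠ j, ¬ (j' < n ∧ r j' = true ∧ ∀ k < j', r k = false) := by
      rintro j' hj' ⟨hj'n, hj'1, hj'2⟩
      rcases lt_or_gt_of_ne hj' with hlt | hlt
      · exact hmin j' hlt ⟨hj'n, hj'1⟩
      · simp [hj'2 j hlt] at hj
    rw [tsum_eq_single j fun j' hj' => if_neg (huniq j' hj'),
      if_pos ⟨hjn, hj, fun k hk => by simpa [hk.trans hjn] using hmin k hk⟩]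
  · rw [tsum_congr fun j => if_neg fun ⟨hjn, hj, _⟩ => h ⟨j, Finset.mem_range.2 hjn, hj⟩,
      tsum_zero]

lemma survPD_eq_sum_range (a : ℕ → ℝ) (r : ℕ → Bool) (n : ℕ) :
    survPD a r n = ∑ j ∈ Finset.range n, ∑ l ∈ Finset.range (n - (j + 1)),
      if r ∈ consecutiveSampled j l then blockMax a j (j + 1 + l) else 0 := by
  refine Finset.sum_congr rfl fun j hj => ?_
  rw [Finset.range_eq_Ico, ← Finset.sum_Ico_consecutive _ (Nat.zero_le (j + 1))
      (Finset.mem_range.1 hj),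
    Finset.sum_eq_zero fun j' hj' => if_neg fun h => by simp at hj'; omega, zero_add,
    Finset.sum_Ico_eq_sum_range]
  refine Finset.sum_congr rfl fun l _ => if_congr ?_ rfl rfl
  rw [mem_consecutiveSampled_iff]
  exact ⟨fun h => h.2, fun h => ⟨by omega, h⟩⟩

lemma survPD_nonneg {a : ℕ → ℝ} (ha : ∀ i, 0 ≤ a i) (r : ℕ → Bool) (n : ℕ) :
    0 ≤ survPD a r n :=
  Finset.sum_nonneg fun j _ => Finset.sum_nonneg fun j' _ => by
    split_ifs
    exacts [blockMax_nonneg ha j j', le_rfl]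

lemma survPDfull_nonneg {a : ℕ → ℝ} (ha : ∀ i, 0 ≤ a i) {T : ℝ} (hT : 0 ≤ T) (r : ℕ → Bool)
    (n : ℕ) : 0 ≤ survPDfull T a r n :=
  add_nonneg (by split_ifs <;> simp [hT]) (survPD_nonneg ha r n)

lemma ofReal_survPD_eq_tsum {a : ℕ → ℝ} (ha : ∀ i, 0 ≤ a i) (r : ℕ → Bool) (n : ℕ) :
    ENNReal.ofReal (survPD a r n) = ∑' j, ∑' l,
      if j + 1 + l < n ∧ r ∈ consecutiveSampled j l
      then ENNReal.ofReal (blockMax a j (j + 1 + l)) else 0 := by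
  have hterm : ∀ j l, 0 ≤ if r ∈ consecutiveSampled j l then blockMax a j (j + 1 + l) else 0 :=
    fun j l => by split_ifs <;> simp [blockMax_nonneg ha]
  have hinner : ∀ j, (∑' l, if j + 1 + l < n ∧ r ∈ consecutiveSampled j l
      then ENNReal.ofReal (blockMax a j (j + 1 + l)) else 0)
      = ∑ l ∈ Finset.range (n - (j + 1)), ENNReal.ofReal
          (if r ∈ consecutiveSampled j l then blockMax a j (j + 1 + l) else 0) := by
    intro j
    rw [← tsum_ite_lt]
    congr 1 with l
    rw [ite_and, apply_ite ENNReal.ofReal, ENNReal.ofReal_zero]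
    exact if_congr (by omega) rfl rfl
  rw [tsum_congr hinner, tsum_eq_sum (s := Finset.range n) fun j hj => by
      rw [Nat.sub_eq_zero_of_le (by simp at hj; omega), Finset.sum_range_zero],
    survPD_eq_sum_range, ENNReal.ofReal_sum_of_nonneg fun j _ =>
      Finset.sum_nonneg fun l _ => hterm j l]
  exact Finset.sum_congr rfl fun j _ => ENNReal.ofReal_sum_of_nonneg fun l _ => hterm j l

end Decompositions

section Expectations

lemma integral_eq_toReal_of_ofReal_ae_eq {Ω : Type*} [MeasurableSpace Ω] {μ : Measure Ω}
    {f : Ω → ℝ} {g : Ω → ℝ≥0∞} (hf : 0 ≤ᵐ[μ] f) (hfg : ∀ᵐ ω ∂μ, ENNReal.ofReal (f ω) = g ω)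
    (hg : AEMeasurable g μ) :
    ∫ ω, f ω ∂μ = (∫⁻ ω, g ω ∂μ).toReal := by
  rw [← integral_toReal hg (hfg.mono fun ω h => h ▸ ENNReal.ofReal_lt_top)]
  refine integral_congr_ae ?_
  filter_upwards [hf, hfg] with ω h0 h
  rw [← h, ENNReal.toReal_ofReal h0]

lemma toReal_setLIntegral_ofReal {α : Type*} [MeasurableSpace α] {ν : Measure α} {s : Set α}
    (hs : MeasurableSet s) {f : α → ℝ} (hf : Measurable f) (h0 : ∀ t ∈ s, 0 ≤ f t) :
    (∫⁻ t in s, ENNReal.ofReal (f t) ∂ν).toReal = ∫ t in s, f t ∂ν :=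
  (integral_eq_lintegral_of_nonneg_ae ((ae_restrict_iff' hs).2 (Eventually.of_forall h0))
    hf.aestronglyMeasurable).symm

variable {Ω : Type*} {N : Ω → ℕ} {A : ℕ → Ω → ℝ} {R : ℕ → Ω → Bool} {c p T : ℝ} {G : ℝ → ℝ}

noncomputable def stemTerm (N : Ω → ℕ) (R : ℕ → Ω → Bool) (T : ℝ) (j : ℕ) : Ω → ℝ≥0∞ :=
  (N ⁻¹' Ioi j ∩ (fun ω i => R i ω) ⁻¹' firstSampled j).indicator fun _ => ENNReal.ofReal T

noncomputable def pairTerm (N : Ω → ℕ) (A : ℕ → Ω → ℝ) (R : ℕ → Ω → Bool) (j l : ℕ) :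
    Ω → ℝ≥0∞ :=
  (N ⁻¹' Ioi (j + 1 + l) ∩ (fun ω i => R i ω) ⁻¹' consecutiveSampled j l).indicator
    fun ω => ENNReal.ofReal (blockMax (fun i => A i ω) j (j + 1 + l))

noncomputable def depthTerm (N : Ω → ℕ) (A : ℕ → Ω → ℝ) (k : ℕ) : Ω → ℝ≥0∞ :=
  (N ⁻¹' Ioi (k + 1)).indicator fun ω => ENNReal.ofReal (A (k + 1) ω)

lemma ofReal_survPDfull_eq_tsum {ω : Ω} (hA : ∀ i, 0 ≤ A i ω) (hT : 0 ≤ T) :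
    ENNReal.ofReal (survPDfull T (fun i => A i ω) (fun i => R i ω) (N ω))
      = ∑' j, stemTerm N R T j ω + ∑' j, ∑' l, pairTerm N A R j l ω := by
  classical
  rw [survPDfull, ENNReal.ofReal_add (by split_ifs <;> simp [hT]) (survPD_nonneg hA _ _),
    apply_ite ENNReal.ofReal, ENNReal.ofReal_zero, ite_exists_eq_tsum_firstSampled,
    ofReal_survPD_eq_tsum hA]
  simp only [stemTerm, pairTerm, indicator_apply]
  exact congrArg₂ (· + ·) (tsum_congr fun j => if_congr Iff.rfl rfl rfl)
    (tsum_congr fun j => tsum_congr fun l => if_congr Iff.rfl rfl rfl)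

lemma ofReal_add_sum_Ico_one_eq_tsum {ω : Ω} (hA : ∀ i, 0 ≤ A i ω) (hT : 0 ≤ T) :
    ENNReal.ofReal (T + ∑ i ∈ Finset.Ico 1 (N ω), A i ω)
      = ENNReal.ofReal T + ∑' k, depthTerm N A k ω := by
  classical
  simp only [depthTerm, indicator_apply, ofReal_add_sum_Ico_one hA hT]
  exact congrArg _ (tsum_congr fun k => if_congr Iff.rfl rfl rfl)

variable [MeasurableSpace Ω]

lemma measurable_stemTerm (hN : Measurable N) (hR : ∀ i, Measurable (R i)) (T : ℝ) (j : ℕ) :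
    Measurable (stemTerm N R T j) :=
  measurable_const.indicator
    ((hN measurableSet_Ioi).inter (measurable_pi_lambda _ hR (measurableSet_firstSampled j)))

lemma measurable_pairTerm (hN : Measurable N) (hA : ∀ i, Measurable (A i))
    (hR : ∀ i, Measurable (R i)) (j l : ℕ) : Measurable (pairTerm N A R j l) :=
  ((measurable_blockMax j _).comp (measurable_pi_lambda _ hA)).ennreal_ofReal.indicator
    ((hN measurableSet_Ioi).inter
      (measurable_pi_lambda _ hR (measurableSet_consecutiveSampled j l)))

lemma measurable_depthTerm (hN : Measurable N) (hA : ∀ i, Measurable (A i)) (k : ℕ) :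
    Measurable (depthTerm N A k) :=
  (hA (k + 1)).ennreal_ofReal.indicator (hN measurableSet_Ioi)

variable {μ : Measure Ω} [IsProbabilityMeasure μ]

lemma cdf_mem_Icc (hcdf : ∀ i, ∀ t ∈ Icc 0 T, (μ {ω | A i ω ≤ t}).toReal = G t) :
    ∀ t ∈ Ioc 0 T, G t ∈ Icc 0 1 := fun t ht =>
  hcdf 0 t (Ioc_subset_Icc_self ht) ▸ ⟨ENNReal.toReal_nonneg, measureReal_le_one⟩

lemma ae_nonneg_of_cdf (hT : 0 ≤ T) (hcdf : ∀ i, ∀ t ∈ Icc 0 T, (μ {ω | A i ω ≤ t}).toReal = G t)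
    (hG0 : G 0 = 0) : ∀ᵐ ω ∂μ, ∀ i, 0 ≤ A i ω :=
  ae_all_iff.2 fun i => ae_nonneg_of_toReal_measure_le_zero (by rw [hcdf i 0 ⟨le_rfl, hT⟩, hG0])

lemma lintegral_stemTerm (hN : Measurable N) (hR : ∀ i, Measurable (R i))
    (hRind : iIndepFun R μ) (hp : ∀ i, (μ {ω | R i ω = true}).toReal = p) (hc0 : 0 ≤ c)
    (hc1 : c < 1) (hgeom : ∀ n, 1 ≤ n → (μ {ω | N ω = n}).toReal = c ^ (n - 1) * (1 - c))
    (hjoint : IndepTriple N (fun ω i => A i ω) (fun ω i => R i ω) μ) (j : ℕ) :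
    ∫⁻ ω, stemTerm N R T j ω ∂μ
      = ENNReal.ofReal (c ^ j) * ENNReal.ofReal ((1 - p) ^ j * p) * ENNReal.ofReal T := by
  rw [stemTerm, lintegral_indicator_const ((hN measurableSet_Ioi).inter
      (measurable_pi_lambda _ hR (measurableSet_firstSampled j))),
    hjoint.measure_inter measurableSet_Ioi (measurableSet_firstSampled j),
    measure_firstSampled hR hRind hp, measure_preimage_Ioi_of_geometric hN hc0 hc1 hgeom, mul_comm]

lemma lintegral_pairTerm (hN : Measurable N) (hA : ∀ i, Measurable (A i))
    (hAind : iIndepFun A μ) (hT : 0 ≤ T)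
    (hcdf : ∀ i, ∀ t ∈ Icc 0 T, (μ {ω | A i ω ≤ t}).toReal = G t) (hG0 : G 0 = 0)
    (hGT : G T = 1) (hR : ∀ i, Measurable (R i)) (hRind : iIndepFun R μ)
    (hp : ∀ i, (μ {ω | R i ω = true}).toReal = p) (hc0 : 0 ≤ c) (hc1 : c < 1)
    (hgeom : ∀ n, 1 ≤ n → (μ {ω | N ω = n}).toReal = c ^ (n - 1) * (1 - c))
    (hjoint : IndepTriple N (fun ω i => A i ω) (fun ω i => R i ω) μ) (j l : ℕ) :
    ∫⁻ ω, pairTerm N A R j l ω ∂μ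
      = ENNReal.ofReal (c ^ (j + 1 + l)) * ENNReal.ofReal (p ^ 2 * (1 - p) ^ l)
        * ∫⁻ t in Ioc 0 T, ENNReal.ofReal (1 - G t ^ (l + 1)) := by
  rw [pairTerm, lintegral_indicator ((hN measurableSet_Ioi).inter
      (measurable_pi_lambda _ hR (measurableSet_consecutiveSampled j l))),
    hjoint.setLIntegral_comp (measurable_pi_lambda _ hA) measurableSet_Ioi
      (measurableSet_consecutiveSampled j l)
      (g := fun a => ENNReal.ofReal (blockMax a j (j + 1 + l)))
      (measurable_blockMax j _).ennreal_ofReal,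
    measure_preimage_Ioi_of_geometric hN hc0 hc1 hgeom, measure_consecutiveSampled hR hRind hp,
    lintegral_blockMax hA hAind hT hcdf hG0 hGT (by omega), show j + 1 + l - j = l + 1 by omega]

lemma lintegral_depthTerm (hN : Measurable N) (hA : ∀ i, Measurable (A i))
    (hNA : IndepFun N (fun ω i => A i ω) μ) (hT : 0 ≤ T)
    (hcdf : ∀ i, ∀ t ∈ Icc 0 T, (μ {ω | A i ω ≤ t}).toReal = G t) (hG0 : G 0 = 0)
    (hGT : G T = 1) (hc0 : 0 ≤ c) (hc1 : c < 1)
    (hgeom : ∀ n, 1 ≤ n → (μ {ω | N ω = n}).toReal = c ^ (n - 1) * (1 - c)) (k : ℕ) :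
    ∫⁻ ω, depthTerm N A k ω ∂μ
      = ENNReal.ofReal (c ^ (k + 1)) * ∫⁻ t in Ioc 0 T, ENNReal.ofReal (1 - G t) := by
  rw [depthTerm, lintegral_indicator (hN measurableSet_Ioi),
    hNA.setLIntegral_comp (measurable_pi_lambda _ hA) measurableSet_Ioi
      (g := fun a => ENNReal.ofReal (a (k + 1))) (measurable_pi_apply _).ennreal_ofReal,
    measure_preimage_Ioi_of_geometric hN hc0 hc1 hgeom,
    lintegral_ofReal_eq_setLIntegral_one_sub_cdf (hA (k + 1)) hT (hcdf (k + 1)) hG0 hGT]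

lemma integral_survPDfull (hN : Measurable N) (hA : ∀ i, Measurable (A i))
    (hAind : iIndepFun A μ) (hT : 0 ≤ T)
    (hcdf : ∀ i, ∀ t ∈ Icc 0 T, (μ {ω | A i ω ≤ t}).toReal = G t) (hG : Measurable G)
    (hG0 : G 0 = 0) (hGT : G T = 1) (hR : ∀ i, Measurable (R i)) (hRind : iIndepFun R μ)
    (hp : ∀ i, (μ {ω | R i ω = true}).toReal = p) (hc0 : 0 ≤ c) (hc1 : c < 1)
    (hgeom : ∀ n, 1 ≤ n → (μ {ω | N ω = n}).toReal = c ^ (n - 1) * (1 - c))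
    (hjoint : IndepTriple N (fun ω i => A i ω) (fun ω i => R i ω) μ) :
    ∫ ω, survPDfull T (fun i => A i ω) (fun i => R i ω) (N ω) ∂μ
      = p / (1 - c) * ∫ t in Ioc 0 T, (1 - c * G t) / (1 - (1 - p) * (c * G t)) := by
  have hp0 : 0 ≤ p := hp 0 ▸ ENNReal.toReal_nonneg
  have hp1 : p ≤ 1 := hp 0 ▸ measureReal_le_one
  have hG01 := cdf_mem_Icc hcdf
  have hApos := ae_nonneg_of_cdf hT hcdf hG0
  have hstem := measurable_stemTerm hN hR T
  have hpair := measurable_pairTerm hN hA hR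
  have hpairInt : ∀ j, ∫⁻ ω, ∑' l, pairTerm N A R j l ω ∂μ
      = ∑' l, ENNReal.ofReal (c ^ (j + 1 + l)) * ENNReal.ofReal (p ^ 2 * (1 - p) ^ l)
        * ∫⁻ t in Ioc 0 T, ENNReal.ofReal (1 - G t ^ (l + 1)) := fun j => by
    rw [lintegral_tsum fun l => (hpair j l).aemeasurable]
    exact tsum_congr (lintegral_pairTerm hN hA hAind hT hcdf hG0 hGT hR hRind hp hc0 hc1
      hgeom hjoint j)
  rw [integral_eq_toReal_of_ofReal_ae_eq (hApos.mono fun ω hω => survPDfull_nonneg hω hT _ _)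
      (hApos.mono fun ω hω => ofReal_survPDfull_eq_tsum hω hT)
      ((Measurable.tsum hstem).add
        (Measurable.tsum fun j => Measurable.tsum (hpair j))).aemeasurable,
    lintegral_add_left (Measurable.tsum hstem), lintegral_tsum fun j => (hstem j).aemeasurable,
    lintegral_tsum fun j => (Measurable.tsum (hpair j)).aemeasurable,
    tsum_congr (lintegral_stemTerm hN hR hRind hp hc0 hc1 hgeom hjoint), tsum_congr hpairInt,
    tsum_stem hc0 hc1 hp0 hp1 hT, tsum_consecutive hc0 hc1 hp0 hp1 hG hG01,
    ← lintegral_add_left measurable_const,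
    setLIntegral_congr_fun measurableSet_Ioc fun t ht => stem_add_consecutive hc0 hc1 hp0
      (mul_nonneg hc0 (hG01 t ht).1) (mul_le_of_le_one_right hc0 (hG01 t ht).2),
    toReal_setLIntegral_ofReal measurableSet_Ioc (by fun_prop) fun t ht => ?_,
    ← integral_const_mul]
  · simp only [div_mul_div_comm]
  have hx : c * G t ≤ c := mul_le_of_le_one_right hc0 (hG01 t ht).2
  have hE : 0 < 1 - (1 - p) * (c * G t) := by nlinarith [mul_nonneg hc0 (hG01 t ht).1]
  exact div_nonneg (mul_nonneg hp0 (by linarith)) (mul_nonneg (by linarith) hE.le)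

lemma integral_add_sum_Ico_one (hN : Measurable N) (hA : ∀ i, Measurable (A i))
    (hNA : IndepFun N (fun ω i => A i ω) μ) (hT : 0 ≤ T)
    (hcdf : ∀ i, ∀ t ∈ Icc 0 T, (μ {ω | A i ω ≤ t}).toReal = G t) (hG : Measurable G)
    (hG0 : G 0 = 0) (hGT : G T = 1) (hc0 : 0 ≤ c) (hc1 : c < 1)
    (hgeom : ∀ n, 1 ≤ n → (μ {ω | N ω = n}).toReal = c ^ (n - 1) * (1 - c)) :
    ∫ ω, (T + ∑ i ∈ Finset.Ico 1 (N ω), A i ω) ∂μ = (∫ t in Ioc 0 T, (1 - c * G t)) / (1 - c) := by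
  have hc : 0 < 1 - c := by linarith
  have hG01 := cdf_mem_Icc hcdf
  have hApos := ae_nonneg_of_cdf hT hcdf hG0
  have hdepth := measurable_depthTerm hN hA
  have hgeomSum : ∑' k, ENNReal.ofReal (c ^ (k + 1)) = ENNReal.ofReal (c / (1 - c)) := by
    refine tsum_ofReal_of_hasSum ?_ fun k => pow_nonneg hc0 _
    simpa only [pow_succ', div_eq_mul_inv] using (hasSum_geometric_of_lt_one hc0 hc1).mul_left c
  have hstem : ENNReal.ofReal T = ∫⁻ _ in Ioc 0 T, ENNReal.ofReal 1 := by
    rw [setLIntegral_const, Real.volume_Ioc, sub_zero, ENNReal.ofReal_one, one_mul]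
  rw [integral_eq_toReal_of_ofReal_ae_eq
      (hApos.mono fun ω hω => add_nonneg hT (Finset.sum_nonneg fun i _ => hω i))
      (hApos.mono fun ω hω => ofReal_add_sum_Ico_one_eq_tsum hω hT)
      (measurable_const.add (Measurable.tsum hdepth)).aemeasurable,
    lintegral_add_left measurable_const, lintegral_const, measure_univ, mul_one,
    lintegral_tsum fun k => (hdepth k).aemeasurable,
    tsum_congr (lintegral_depthTerm hN hA hNA hT hcdf hG0 hGT hc0 hc1 hgeom),
    ENNReal.tsum_mul_right, hgeomSum, hstem, ← lintegral_const_mul' _ _ ENNReal.ofReal_ne_top,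
    ← lintegral_add_left measurable_const, ← integral_div]
  refine (congrArg ENNReal.toReal (setLIntegral_congr_fun measurableSet_Ioc fun t ht => ?_)).trans
    (toReal_setLIntegral_ofReal measurableSet_Ioc (f := fun t => (1 - c * G t) / (1 - c))
      (by fun_prop) fun t ht => div_nonneg (by nlinarith [(hG01 t ht).2]) hc.le)
  rw [← ENNReal.ofReal_mul (div_nonneg hc0 hc.le), ← ENNReal.ofReal_add zero_le_one
    (mul_nonneg (div_nonneg hc0 hc.le) (sub_nonneg.2 (hG01 t ht).2))]
  congr 1
  field_simp
  ring

end Expectations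

section Asymptotics

variable {F : ℝ → ℝ}

lemma eventually_pos_of_integrableOn_one_sub (hFmono : Monotone F)
    (hFint : IntegrableOn (fun t => 1 - F t) (Ioi 0)) : ∀ᶠ T in atTop, 0 < F T := by
  suffices h : ∃ T₀, 0 < F T₀ by
    obtain ⟨T₀, hT₀⟩ := h
    exact eventually_atTop.2 ⟨T₀, fun T hT => hT₀.trans_le (hFmono hT)⟩
  by_contra! hF
  have hone : IntegrableOn (fun _ => (1 : ℝ)) (Ioi (0 : ℝ)) :=
    hFint.mono' aestronglyMeasurable_const (Eventually.of_forall fun t => by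
      rw [norm_one]
      linarith [hF t])
  simp [integrableOn_const_iff] at hone

lemma tendsto_setIntegral_Ioc_atTop {f : ℝ → ℝ} (hf : IntegrableOn f (Ioi 0)) :
    Tendsto (fun T => ∫ t in Ioc 0 T, f t) atTop (nhds (∫ t in Ioi 0, f t)) :=
  (intervalIntegral_tendsto_integral_Ioi 0 hf tendsto_id).congr'
    (eventually_ge_atTop 0 |>.mono fun _ hT => intervalIntegral.integral_of_le hT)

lemma integrableOn_one_sub_div {p : ℝ} (hp0 : 0 < p) (hp1 : p ≤ 1) (hFmono : Monotone F)
    (hF0 : F 0 = 0) (hFlt : ∀ t, 0 ≤ t → F t < 1)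
    (hFint : IntegrableOn (fun t => 1 - F t) (Ioi 0)) :
    IntegrableOn (fun t => (1 - F t) / (1 - (1 - p) * F t)) (Ioi 0) := by
  have hFm := hFmono.measurable
  refine (hFint.const_mul p⁻¹).mono'
    (by fun_prop : Measurable fun t => (1 - F t) / (1 - (1 - p) * F t)).aestronglyMeasurable
    ((ae_restrict_iff' measurableSet_Ioi).2 (Eventually.of_forall fun t ht => ?_))
  have hFt0 : 0 ≤ F t := hF0 ▸ hFmono (le_of_lt ht)
  have hFt1 := hFlt t (le_of_lt ht)
  have hD : p ≤ 1 - (1 - p) * F t := by nlinarith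
  rw [Real.norm_eq_abs, abs_of_nonneg (div_nonneg (by linarith) (by linarith)),
    div_le_iff₀ (by linarith)]
  calc 1 - F t = p⁻¹ * (1 - F t) * p := by field_simp
    _ ≤ p⁻¹ * (1 - F t) * (1 - (1 - p) * F t) := by gcongr

lemma integral_one_sub_pos (hFlt : ∀ t, 0 ≤ t → F t < 1)
    (hFint : IntegrableOn (fun t => 1 - F t) (Ioi 0)) : 0 < ∫ t in Ioi 0, (1 - F t) := by
  rw [setIntegral_pos_iff_support_of_nonneg_ae ((ae_restrict_iff' measurableSet_Ioi).2
    (Eventually.of_forall fun t ht => sub_nonneg.2 (hFlt t (le_of_lt ht)).le)) hFint]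
  have hsupp : Function.support (fun t => 1 - F t) ∩ Ioi 0 = Ioi 0 :=
    inter_eq_right.2 fun t ht => sub_ne_zero.2 (hFlt t (le_of_lt ht)).ne'
  simp [hsupp]

end Asymptotics

theorem expectation_ratio_PD_large_time_general
    {Ω : Type*} [MeasurableSpace Ω] (μ : Measure Ω) [IsProbabilityMeasure μ]
    (p : ℝ) (hp : p ∈ Set.Ioc (0 : ℝ) 1)
    (F : ℝ → ℝ) (hFmono : Monotone F)
    (hF0 : F 0 = 0) (hFlt : ∀ t : ℝ, 0 ≤ t → F t < 1)
    (hFint : IntegrableOn (fun t => 1 - F t) (Set.Ioi 0))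
    (N : ℝ → Ω → ℕ) (hNmeas : ∀ T, Measurable (N T))
    (A : ℝ → ℕ → Ω → ℝ) (hAmeas : ∀ T i, Measurable (A T i))
    (R : ℕ → Ω → Bool) (hRmeas : ∀ i, Measurable (R i))
    (hRiid : iIndepFun R μ)
    (hRber : ∀ i, (μ {ω | R i ω = true}).toReal = p)
    (hyp : ∀ T : ℝ, 0 < T → 0 < F T →
      ((∀ n : ℕ, 1 ≤ n →
          (μ {ω | N T ω = n}).toReal = (F T) ^ (n - 1) * (1 - F T)) ∧
       iIndepFun (A T) μ ∧
       (∀ i, ∀ t ∈ Set.Icc 0 T, (μ {ω | A T i ω ≤ t}).toReal = F t / F T) ∧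
       (∀ (s : Set ℕ) (t : Set (ℕ → ℝ)) (u : Set (ℕ → Bool)),
         MeasurableSet s → MeasurableSet t → MeasurableSet u →
         μ (N T ⁻¹' s ∩ (fun ω i => A T i ω) ⁻¹' t ∩ (fun ω i => R i ω) ⁻¹' u)
           = μ (N T ⁻¹' s) * μ ((fun ω i => A T i ω) ⁻¹' t)
             * μ ((fun ω i => R i ω) ⁻¹' u)))) :
    Tendsto (fun T : ℝ =>
        (∫ ω, survPDfull T (fun i => A T i ω) (fun i => R i ω) (N T ω) ∂μ)
          / ∫ ω, (T + ∑ i ∈ Finset.Ico 1 (N T ω), A T i ω) ∂μ)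
      atTop
      (nhds ((p * ∫ t in Set.Ioi (0:ℝ), (1 - F t) / (1 - (1 - p) * F t))
        / ∫ t in Set.Ioi (0:ℝ), (1 - F t))) := by
  obtain ⟨hp0, hp1⟩ := hp
  have hFm : Measurable F := hFmono.measurable
  refine (((tendsto_setIntegral_Ioc_atTop
      (integrableOn_one_sub_div hp0 hp1 hFmono hF0 hFlt hFint)).const_mul p).div
      (tendsto_setIntegral_Ioc_atTop hFint) (integral_one_sub_pos hFlt hFint).ne').congr' ?_
  filter_upwards [eventually_pos_of_integrableOn_one_sub hFmono hFint, eventually_gt_atTop 0]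
    with T hFT hT
  obtain ⟨hgeom, hAind, hAcdf, hjoint⟩ := hyp T hT hFT
  have hFT1 := hFlt T hT.le
  have hG : Measurable fun t => F t / F T := hFm.div_const _
  have hG0 : F 0 / F T = 0 := by rw [hF0, zero_div]
  have hGT : F T / F T = 1 := div_self hFT.ne'
  rw [integral_survPDfull (hNmeas T) (hAmeas T) hAind hT.le hAcdf hG hG0 hGT hRmeas hRiid hRber
      hFT.le hFT1 hgeom hjoint,
    integral_add_sum_Ico_one (hNmeas T) (hAmeas T) (IndepTriple.indepFun_left hjoint) hT.le hAcdf
      hG hG0 hGT hFT.le hFT1 hgeom]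
  simp only [Pi.div_apply, mul_div_cancel₀ _ hFT.ne']
  rw [div_mul_eq_mul_div, div_div_div_cancel_right₀ (sub_pos.2 hFT1).ne']

/-- for a time-homogeneous supercritical coalescent point process,
`lim_{T→∞} E(S_T(p))/E(S_T(1)) = p ∫₀^∞ (1-F)/(1-(1-p)F) dt / ∫₀^∞ (1-F) dt`. -/
theorem expectation_ratio_PD_large_time
    {Ω : Type*} [MeasurableSpace Ω] (μ : Measure Ω) [IsProbabilityMeasure μ]
    (p : ℝ) (hp : p ∈ Set.Ioc (0 : ℝ) 1)
    (F : ℝ → ℝ) (hFcont : Continuous F) (hFmono : Monotone F)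
    (hF0 : F 0 = 0) (hFlt : ∀ t : ℝ, 0 ≤ t → F t < 1)
    (hFint : IntegrableOn (fun t => 1 - F t) (Set.Ioi 0))
    (N : ℝ → Ω → ℕ) (hNmeas : ∀ T, Measurable (N T))
    (A : ℝ → ℕ → Ω → ℝ) (hAmeas : ∀ T i, Measurable (A T i))
    (R : ℕ → Ω → Bool) (hRmeas : ∀ i, Measurable (R i))
    (hRiid : iIndepFun R μ)
    (hRber : ∀ i, (μ {ω | R i ω = true}).toReal = p)
    (hyp : ∀ T : ℝ, 0 < T → 0 < F T →
      ((∀ n : ℕ, 1 ≤ n →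
          (μ {ω | N T ω = n}).toReal = (F T) ^ (n - 1) * (1 - F T)) ∧
       iIndepFun (A T) μ ∧
       (∀ i, ∀ t ∈ Set.Icc 0 T, (μ {ω | A T i ω ≤ t}).toReal = F t / F T) ∧
       (∀ (s : Set ℕ) (t : Set (ℕ → ℝ)) (u : Set (ℕ → Bool)),
         MeasurableSet s → MeasurableSet t → MeasurableSet u →
         μ (N T ⁻¹' s ∩ (fun ω i => A T i ω) ⁻¹' t ∩ (fun ω i => R i ω) ⁻¹' u)
           = μ (N T ⁻¹' s) * μ ((fun ω i => A T i ω) ⁻¹' t)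
             * μ ((fun ω i => R i ω) ⁻¹' u)))) :
    Tendsto (fun T : ℝ =>
        (∫ ω, survPDfull T (fun i => A T i ω) (fun i => R i ω) (N T ω) ∂μ)
          / ∫ ω, (T + ∑ i ∈ Finset.Ico 1 (N T ω), A T i ω) ∂μ)
      atTop
      (nhds ((p * ∫ t in Set.Ioi (0:ℝ), (1 - F t) / (1 - (1 - p) * F t))
        / ∫ t in Set.Ioi (0:ℝ), (1 - F t))) :=
  expectation_ratio_PD_large_time_general μ p hp F hFmono hF0 hFlt hFint N hNmeas A hAmeas R hRmeas
    hRiid hRber hyp
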